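/- arXiv:2112.08170 — 2 statements merged into one kernel-verified Lean document; each statement's English description precedes it below -/
import Mathlib

section
/- Let (X,d) be a metric space with the Heine–Borel property, μ a nonnegative σ-finite Radon measure on X with μ(X) ≠ 0, G a countable discrete group acting properly discontinuously on X by μ-preserving homeomorphisms, and P a relative perimeter functional on X. Let (E_k) be Borel subsets of X, I at most countable, E^i ⊂ X Borel, g_k^i ∈ G with (g_k^{i'})^{-1} g_k^i → ∞ for all i ≠ i' and (g_k^i)^{-1} E_k → E^i in L¹_loc(μ) for each i ∈ I. Then Σ_{i∈I} P(E^i, X) ≤ liminf_k P(E_k, X) and Σ_{i∈I} μ(E^i) ≤ liminf_k μ(E_k). -/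
open MeasureTheory Filter Topology Set Pointwise ENNReal

/-- Convergence of sets in `L¹_loc(μ)`. -/
def L1LocTendsto {X : Type*} [TopologicalSpace X] [MeasurableSpace X]
    (μ : Measure X) (E : ℕ → Set X) (A : Set X) : Prop :=
  ∀ K : Set X, IsCompact K →
    Tendsto (fun k => μ (symmDiff (E k) A ∩ K)) atTop (𝓝 0)

/-- A sequence `g_k → ∞` in `G`. -/
def DivergesTo {G : Type*} (g : ℕ → G) : Prop :=
  ∀ F : Set G, F.Finite → {k | g k ∈ F}.Finite

/-- Properly discontinuous action. -/
def ProperlyDisc (G : Type*) (X : Type*) [SMul G X] [TopologicalSpace X] : Prop :=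
  ∀ K : Set X, IsCompact K → {g : G | (g • K) ∩ K ≠ ∅}.Finite

/-- A relative perimeter functional: a map from pairs (Borel set, open set) to `[0,∞]`
satisfying semicontinuity, Beppo Levi, monotonicity, superadditivity and `G`-invariance. -/
structure RelPerimeter {X : Type*} [MetricSpace X] [MeasurableSpace X]
    (μ : Measure X) (G : Type*) [Group G] [MulAction G X] where
  P : Set X → Set X → ℝ≥0∞
  semicont : ∀ (D : ℕ → Set X) (B U : Set X), (∀ k, MeasurableSet (D k)) →
    MeasurableSet B → IsOpen U → L1LocTendsto μ D B →
    P B U ≤ liminf (fun k => P (D k) U) atTop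
  beppoLevi : ∀ (D : Set X) (U : ℕ → Set X), MeasurableSet D →
    (∀ k, IsOpen (U k)) → Monotone U → (⋃ k, U k) = Set.univ →
    Tendsto (fun k => P D (U k)) atTop (𝓝 (P D Set.univ))
  mono : ∀ (B U V : Set X), MeasurableSet B → IsOpen U → IsOpen V → U ⊆ V →
    P B U ≤ P B V
  superadd : ∀ (B : Set X) (M : ℕ) (U : Fin M → Set X), MeasurableSet B →
    (∀ j, IsOpen (U j)) → Pairwise (Function.onFun Disjoint U) →
    (∑ j, P B (U j)) ≤ P B (⋃ j, U j)
  ginv : ∀ (g : G) (B U : Set X), MeasurableSet B → IsOpen U →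
    P (g • B) (g • U) = P B U


/- ### Auxiliary lemmas -/

theorem liminf_finset_sum' {ι : Type*} (F : Finset ι) (f : ι → ℕ → ℝ≥0∞) :
    (∑ i ∈ F, liminf (f i) atTop) ≤ liminf (fun k => ∑ i ∈ F, f i k) atTop := by
  classical
  simp only [liminf_eq_iSup_iInf_of_nat]
  rw [ENNReal.finsetSum_iSup_of_monotone
    (f := fun i n => ⨅ k, ⨅ (_ : k ≥ n), f i k)
    (fun i a b hab => le_iInf₂ fun k hk => iInf₂_le k (hab.trans hk))]
  exact iSup_mono fun n => le_iInf₂ fun k hk =>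
    Finset.sum_le_sum fun i _ => iInf₂_le k hk

section Aux
variable {G X : Type*} [Group G] [MulAction G X] [TopologicalSpace X]

omit [TopologicalSpace X] in
theorem aux_smul_eq_preimage (g : G) (B : Set X) :
    g • B = (fun x => g⁻¹ • x) ⁻¹' B := by
  ext x; simp [Set.mem_smul_set_iff_inv_smul_mem]

theorem aux_smul_meas [MeasurableSpace X] [BorelSpace X]
    (hcont : ∀ g : G, Continuous fun x : X => g • x) (g : G)
    {B : Set X} (hB : MeasurableSet B) : MeasurableSet (g • B) := by
  rw [aux_smul_eq_preimage]; exact (hcont g⁻¹).measurable hB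

theorem aux_smul_open (hcont : ∀ g : G, Continuous fun x : X => g • x) (g : G)
    {B : Set X} (hB : IsOpen B) : IsOpen (g • B) := by
  rw [aux_smul_eq_preimage]; exact hB.preimage (hcont g⁻¹)

omit [TopologicalSpace X] in
theorem aux_smul_measure [MeasurableSpace X] {μ : Measure X}
    (hpres : ∀ g : G, MeasurePreserving (fun x : X => g • x) μ μ)
    (g : G) {S : Set X} (hS : MeasurableSet S) : μ (g • S) = μ S := by
  rw [aux_smul_eq_preimage, (hpres g⁻¹).measure_preimage hS.nullMeasurableSet]

theorem aux_event_disj (hPD : ProperlyDisc G X) {K : Set X} (hK : IsCompact K)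
    (a b : ℕ → G) (hdiv : DivergesTo fun k => (b k)⁻¹ * a k) :
    ∀ᶠ k in atTop, Disjoint (a k • K) (b k • K) := by
  have hfin := hdiv _ (hPD K hK)
  have hsub : {k | ¬ Disjoint (a k • K) (b k • K)} ⊆
      {k | ((b k)⁻¹ * a k) ∈ {g : G | (g • K) ∩ K ≠ ∅}} := by
    intro k hk
    rw [Set.mem_setOf_eq, Set.not_disjoint_iff] at hk
    obtain ⟨x, hx1, hx2⟩ := hk
    show (((b k)⁻¹ * a k) • K) ∩ K ≠ ∅
    rw [← Set.nonempty_iff_ne_empty]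
    refine ⟨(b k)⁻¹ • x, ?_, ?_⟩
    · rw [mul_smul]
      exact Set.smul_mem_smul_set hx1
    · obtain ⟨z, hz, rfl⟩ := hx2
      simpa [inv_smul_smul] using hz
  rw [← Nat.cofinite_eq_atTop]
  exact Filter.eventually_cofinite.mpr (hfin.subset hsub)

end Aux
/-- **Corollary 3.2.** Under the assumptions of the semicontinuity theorem, both the
perimeter `P(·, X)` and the measure `μ` are countably semicontinuous along the
translated convergent sequences: `Σ_i P(E^i, X) ≤ liminf_k P(E_k, X)` and
`Σ_i μ(E^i) ≤ liminf_k μ(E_k)`. -/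
theorem perimeter_and_measure_semicontinuity
    {X : Type*} [MetricSpace X] [ProperSpace X] [MeasurableSpace X] [BorelSpace X]
    (μ : Measure X) [SigmaFinite μ] [μ.Regular] (hμ0 : μ Set.univ ≠ 0)
    {G : Type*} [Group G] [Countable G] [MulAction G X]
    (hcont : ∀ g : G, Continuous fun x : X => g • x)
    (hpres : ∀ g : G, MeasurePreserving (fun x : X => g • x) μ μ)
    (hPD : ProperlyDisc G X)
    (Per : RelPerimeter μ G)
    (Ek : ℕ → Set X) (hEk : ∀ k, MeasurableSet (Ek k))
    {I : Type*} [Countable I]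
    (E : I → Set X) (hE : ∀ i, MeasurableSet (E i))
    (g : I → ℕ → G)
    (hdiv : ∀ i i', i ≠ i' → DivergesTo fun k => (g i' k)⁻¹ * g i k)
    (hconv : ∀ i, L1LocTendsto μ (fun k => (g i k)⁻¹ • Ek k) (E i)) :
    (∑' i, Per.P (E i) Set.univ) ≤ liminf (fun k => Per.P (Ek k) Set.univ) atTop ∧
    (∑' i, μ (E i)) ≤ liminf (fun k => μ (Ek k)) atTop := by
  classical
  -- X is nonempty
  have hXne : Nonempty X := by
    by_contra h
    rw [not_nonempty_iff] at h
    exact hμ0 (by simp [Set.univ_eq_empty_iff.mpr h])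
  obtain ⟨x0⟩ := hXne
  -- measurability of translated sets
  have hDk : ∀ (i : I) (k : ℕ), MeasurableSet ((g i k)⁻¹ • Ek k) :=
    fun i k => aux_smul_meas hcont _ (hEk k)
  -- eventual pairwise disjointness on a finset
  have hdisjF : ∀ (F : Finset I) {K : Set X}, IsCompact K →
      ∀ᶠ k in atTop, ∀ i ∈ F, ∀ i' ∈ F, i ≠ i' →
        Disjoint (g i k • K) (g i' k • K) := by
    intro F K hK
    rw [eventually_all_finset]
    intro i _
    rw [eventually_all_finset]
    intro i' _
    by_cases h : i = i'
    · exact Eventually.of_forall fun k hne => absurd h hne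
    · exact (aux_event_disj hPD hK (g i) (g i') (hdiv i i' h)).mono fun k hk _ => hk
  set L := liminf (fun k => Per.P (Ek k) Set.univ) atTop with hL
  set Lμ := liminf (fun k => μ (Ek k)) atTop with hLμ
  -- key perimeter estimate
  have keyP : ∀ (F : Finset I) (n : ℕ),
      (∑ i ∈ F, Per.P (E i) (Metric.ball x0 n)) ≤ L := by
    intro F n
    set U : Set X := Metric.ball x0 n with hU
    set K : Set X := Metric.closedBall x0 n with hK
    have hUK : U ⊆ K := Metric.ball_subset_closedBall
    have hKcomp : IsCompact K := isCompact_closedBall _ _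
    have hUopen : IsOpen U := Metric.isOpen_ball
    have step2 : ∀ i : I,
        Per.P (E i) U ≤ liminf (fun k => Per.P (Ek k) ((g i k) • U)) atTop := by
      intro i
      have heq : ∀ k, Per.P (Ek k) ((g i k) • U) = Per.P ((g i k)⁻¹ • Ek k) U := by
        intro k
        have h := Per.ginv (g i k) ((g i k)⁻¹ • Ek k) U (hDk i k) hUopen
        rwa [smul_inv_smul] at h
      simp only [heq]
      exact Per.semicont _ _ _ (hDk i) (hE i) hUopen (hconv i)
    have step4 : ∀ᶠ k in atTop,
        (∑ i ∈ F, Per.P (Ek k) ((g i k) • U)) ≤ Per.P (Ek k) Set.univ := by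
      filter_upwards [hdisjF F hKcomp] with k hk
      set M := F.card with hM
      set e : Fin M ≃ {x // x ∈ F} := F.equivFin.symm with he
      set V : Fin M → Set X := fun j => g (e j) k • U with hV
      have hVopen : ∀ j, IsOpen (V j) := fun j => aux_smul_open hcont _ hUopen
      have hVdisj : Pairwise (Function.onFun Disjoint V) := by
        intro j j' hjj'
        have hne : ((e j : I)) ≠ (e j' : I) := by
          intro hcoe
          exact hjj' (e.injective (Subtype.coe_injective hcoe))
        exact (hk _ (e j).2 _ (e j').2 hne).mono
          (Set.smul_set_mono hUK) (Set.smul_set_mono hUK)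
      have hsum : (∑ i ∈ F, Per.P (Ek k) ((g i k) • U)) = ∑ j, Per.P (Ek k) (V j) := by
        rw [← Finset.sum_coe_sort F (fun i => Per.P (Ek k) ((g i k) • U)),
          ← Equiv.sum_comp e (fun s : {x // x ∈ F} => Per.P (Ek k) ((g s k) • U))]
      rw [hsum]
      calc (∑ j, Per.P (Ek k) (V j)) ≤ Per.P (Ek k) (⋃ j, V j) :=
            Per.superadd (Ek k) M V (hEk k) hVopen hVdisj
        _ ≤ Per.P (Ek k) Set.univ :=
            Per.mono _ _ _ (hEk k) (isOpen_iUnion hVopen) isOpen_univ (Set.subset_univ _)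
    calc (∑ i ∈ F, Per.P (E i) U)
        ≤ ∑ i ∈ F, liminf (fun k => Per.P (Ek k) ((g i k) • U)) atTop :=
          Finset.sum_le_sum fun i _ => step2 i
      _ ≤ liminf (fun k => ∑ i ∈ F, Per.P (Ek k) ((g i k) • U)) atTop :=
          liminf_finset_sum' F _
      _ ≤ L := liminf_le_liminf step4
  -- key measure estimate
  have keyM : ∀ (F : Finset I) (n : ℕ),
      (∑ i ∈ F, μ (E i ∩ Metric.closedBall x0 n)) ≤ Lμ := by
    intro F n
    set K : Set X := Metric.closedBall x0 n with hK
    have hKcomp : IsCompact K := isCompact_closedBall _ _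
    have hKmeas : MeasurableSet K := measurableSet_closedBall
    have step2 : ∀ i : I,
        μ (E i ∩ K) ≤ liminf (fun k => μ (Ek k ∩ (g i k • K))) atTop := by
      intro i
      have heq : ∀ k, μ (Ek k ∩ (g i k • K)) = μ (((g i k)⁻¹ • Ek k) ∩ K) := by
        intro k
        have h1 : (g i k) • (((g i k)⁻¹ • Ek k) ∩ K) = Ek k ∩ (g i k • K) := by
          rw [Set.smul_set_inter, smul_inv_smul]
        rw [← h1, aux_smul_measure hpres _ ((hDk i k).inter hKmeas)]
      simp only [heq]
      rw [le_liminf_iff]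
      intro b hb
      have hmfin : μ (E i ∩ K) < ∞ :=
        lt_of_le_of_lt (measure_mono Set.inter_subset_right) hKcomp.measure_lt_top
      have hpos : 0 < μ (E i ∩ K) - b := tsub_pos_of_lt hb
      filter_upwards [(hconv i K hKcomp).eventually (gt_mem_nhds hpos)] with k hks
      by_contra hcon
      push_neg at hcon
      have hsub : E i ∩ K ⊆ (((g i k)⁻¹ • Ek k) ∩ K) ∪
          (symmDiff ((g i k)⁻¹ • Ek k) (E i) ∩ K) := by
        intro x ⟨hx1, hx2⟩
        by_cases hxD : x ∈ (g i k)⁻¹ • Ek k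
        · exact Or.inl ⟨hxD, hx2⟩
        · exact Or.inr ⟨Or.inr ⟨hx1, hxD⟩, hx2⟩
      have hchain : μ (E i ∩ K) < μ (E i ∩ K) := by
        calc μ (E i ∩ K) ≤ μ ((((g i k)⁻¹ • Ek k) ∩ K) ∪
              (symmDiff ((g i k)⁻¹ • Ek k) (E i) ∩ K)) := measure_mono hsub
          _ ≤ μ (((g i k)⁻¹ • Ek k) ∩ K) +
              μ (symmDiff ((g i k)⁻¹ • Ek k) (E i) ∩ K) := measure_union_le _ _
          _ < b + (μ (E i ∩ K) - b) :=
              ENNReal.add_lt_add_of_le_of_lt (hcon.trans_lt (hb.trans hmfin)).ne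
                hcon hks
          _ = μ (E i ∩ K) := add_tsub_cancel_of_le hb.le
      exact absurd hchain (lt_irrefl _)
    have step4 : ∀ᶠ k in atTop,
        (∑ i ∈ F, μ (Ek k ∩ (g i k • K))) ≤ μ (Ek k) := by
      filter_upwards [hdisjF F hKcomp] with k hk
      have hmeas : ∀ i ∈ F, MeasurableSet (Ek k ∩ (g i k • K)) :=
        fun i _ => (hEk k).inter (aux_smul_meas hcont _ hKmeas)
      have hpd : (F : Set I).PairwiseDisjoint (fun i => Ek k ∩ (g i k • K)) := by
        intro i hi i' hi' hne
        exact ((hk i hi i' hi' hne).mono Set.inter_subset_right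
          Set.inter_subset_right)
      rw [← measure_biUnion_finset hpd hmeas]
      exact measure_mono (Set.iUnion₂_subset fun i _ => Set.inter_subset_left)
    calc (∑ i ∈ F, μ (E i ∩ K))
        ≤ ∑ i ∈ F, liminf (fun k => μ (Ek k ∩ (g i k • K))) atTop :=
          Finset.sum_le_sum fun i _ => step2 i
      _ ≤ liminf (fun k => ∑ i ∈ F, μ (Ek k ∩ (g i k • K))) atTop :=
          liminf_finset_sum' F _
      _ ≤ Lμ := liminf_le_liminf step4
  constructor
  · rw [ENNReal.tsum_eq_iSup_sum]
    refine iSup_le fun F => ?_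
    have htend : Tendsto (fun n : ℕ => ∑ i ∈ F, Per.P (E i) (Metric.ball x0 n)) atTop
        (𝓝 (∑ i ∈ F, Per.P (E i) Set.univ)) := by
      refine tendsto_finset_sum _ fun i _ => ?_
      exact Per.beppoLevi (E i) (fun n => Metric.ball x0 n) (hE i)
        (fun n => Metric.isOpen_ball)
        (fun a b hab => Metric.ball_subset_ball (by exact_mod_cast hab))
        (Metric.iUnion_ball_nat x0)
    exact le_of_tendsto' htend fun n => keyP F n
  · rw [ENNReal.tsum_eq_iSup_sum]
    refine iSup_le fun F => ?_
    have htend : Tendsto (fun n : ℕ => ∑ i ∈ F, μ (E i ∩ Metric.closedBall x0 n)) atTop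
        (𝓝 (∑ i ∈ F, μ (E i))) := by
      refine tendsto_finset_sum _ fun i _ => ?_
      have hmono : Monotone (fun n : ℕ => E i ∩ Metric.closedBall x0 n) :=
        fun a b hab => Set.inter_subset_inter_right _
          (Metric.closedBall_subset_closedBall (by exact_mod_cast hab))
      have hun : (⋃ n : ℕ, E i ∩ Metric.closedBall x0 n) = E i := by
        rw [← Set.inter_iUnion, Metric.iUnion_closedBall_nat, Set.inter_univ]
      simpa [hun, Function.comp_def] using tendsto_measure_iUnion_atTop (μ := μ) hmono
    exact le_of_tendsto' htend fun n => keyM F n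
end

section
/- Let (X,d) be a complete locally compact metric space, μ a nonnegative σ-finite Radon measure on X, and G a topological group acting on X by homeomorphisms preserving μ-nullsets. Assume: (i) the action of G is properly discontinuous; (ii) the set S of points x ∈ X with nontrivial stabilizer G_x := {g ∈ G : gx = x} ≠ {1} satisfies μ(S) = 0; (iii) X is compactly generated by the action, i.e., there exists a compact K ⊂ X with GK = X. Then there exists a precompact Borel set B ⊂ X such that G·(closure of B) = X, μ(∂B) = 0, and μ(gB ∩ B) = 0 for every g ∈ G with g ≠ 1. -/
open MeasureTheory Filter Topology Set Pointwise ENNReal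

/-!
The set `S` of points with nontrivial stabiliser is closed and null. Off `S`, every point has
arbitrarily small balls with null boundary that are disjoint from all their nontrivial translates;
countably many of them cover `K \ S`, locally finitely on the complement of `S`. Removing from
each ball the translates of the earlier balls by the finitely many group elements that move the
compact set containing them all yields pieces whose union `W` is disjoint from its nontrivial
translates and still covers `K \ S` up to translation. Local finiteness puts the boundary of `W`
inside `S` together with countably many null spheres and their translates, so
`B = W ∪ (K ∩ S)` works.
-/

section Topology

variable {X : Type*} [TopologicalSpace X]

theorem mem_closure_inter_of_mem_nhds {s t : Set X} {x : X} (hx : x ∈ closure s)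
    (ht : t ∈ 𝓝 x) : x ∈ closure (s ∩ t) := by
  have := isOpen_interior.inter_closure ⟨mem_interior_iff_mem_nhds.2 ht, hx⟩
  rw [inter_comm] at this
  exact closure_mono (inter_subset_inter_right _ interior_subset) this

theorem frontier_iUnion_subset_of_locallyFinite_off {ι : Type*} {f : ι → Set X} {S : Set X}
    (hf : ∀ y ∉ S, ∃ V ∈ 𝓝 y, {i | (f i ∩ V).Nonempty}.Finite) :
    frontier (⋃ i, f i) ⊆ S ∪ ⋃ i, frontier (f i) := by
  intro y ⟨hy_cl, hy_int⟩
  by_contra! hy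
  rw [mem_union, not_or] at hy
  obtain ⟨V, hV, hfin⟩ := hf y hy.1
  have hy_fin : y ∈ closure (⋃ i ∈ {i | (f i ∩ V).Nonempty}, f i) := by
    refine closure_mono ?_ (mem_closure_inter_of_mem_nhds hy_cl hV)
    rintro z ⟨hz, hzV⟩
    obtain ⟨i, hi⟩ := mem_iUnion.1 hz
    exact mem_biUnion ⟨z, hi, hzV⟩ hi
  rw [hfin.closure_biUnion] at hy_fin
  obtain ⟨i, -, hi⟩ := mem_iUnion₂.1 hy_fin
  exact hy.2 (mem_iUnion.2 ⟨i, hi, fun h => hy_int (interior_mono (subset_iUnion f i) h)⟩)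

theorem frontier_sdiff_subset (s t : Set X) : frontier (s \ t) ⊆ frontier s ∪ frontier t := by
  rw [sdiff_eq, ← frontier_compl t]
  exact (frontier_inter_subset s tᶜ).trans (union_subset_union inter_subset_left inter_subset_right)

theorem frontier_biUnion_subset {ι : Type*} {s : Set ι} (hs : s.Finite) (f : ι → Set X) :
    frontier (⋃ i ∈ s, f i) ⊆ ⋃ i ∈ s, frontier (f i) := by
  refine hs.induction_on _ (by simp) fun {a t} _ _ ih => ?_
  simp only [biUnion_insert]
  exact (frontier_union_subset _ _).trans
    (union_subset_union inter_subset_left (inter_subset_right.trans ih))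

end Topology

section Action

variable {G X : Type*} [Group G] [MulAction G X] [TopologicalSpace X]

theorem ProperlyDisc.finite_smul_inter_nonempty (h : ProperlyDisc G X) {K : Set X}
    (hK : IsCompact K) : {g : G | (g • K ∩ K).Nonempty}.Finite := by
  simpa only [nonempty_iff_ne_empty] using h K hK

variable [ContinuousConstSMul G X]

theorem frontier_smul (g : G) (s : Set X) : frontier (g • s) = g • frontier s := by
  rw [frontier, frontier, closure_smul, interior_smul, smul_set_sdiff]

variable [T2Space X]

theorem eventually_smallSets_disjoint_smul_of_smul_ne {g : G} {x : X} (hgx : g • x ≠ x) :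
    ∀ᶠ V in (𝓝 x).smallSets, Disjoint (g • V) V := by
  refine (eventually_smallSets' fun V W hVW hW => hW.mono (smul_set_mono hVW) hVW).2 ?_
  obtain ⟨U₁, hU₁, U₂, hU₂, hU⟩ := Filter.disjoint_iff.1 (disjoint_nhds_nhds.2 hgx)
  refine ⟨U₂ ∩ (g • ·) ⁻¹' U₁,
    inter_mem hU₂ ((continuous_const_smul g).continuousAt.preimage_mem_nhds hU₁), ?_⟩
  refine hU.mono ?_ inter_subset_left
  rintro _ ⟨y, hy, rfl⟩
  exact hy.2

variable [WeaklyLocallyCompactSpace X]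

theorem ProperlyDisc.isClosed_setOf_exists_ne_one_smul_eq (h : ProperlyDisc G X) :
    IsClosed {x : X | ∃ g : G, g ≠ 1 ∧ g • x = x} := by
  refine isClosed_of_closure_subset fun x hx => ?_
  obtain ⟨L, hL, hLx⟩ := exists_compact_mem_nhds x
  set F := {g : G | (g • L ∩ L).Nonempty ∧ g ≠ 1}
  have hF : F.Finite := (h.finite_smul_inter_nonempty hL).subset fun g hg => hg.1
  have hsub : {x : X | ∃ g : G, g ≠ 1 ∧ g • x = x} ∩ L ⊆ ⋃ g ∈ F, {y | g • y = y} := by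
    rintro y ⟨⟨g, hg, hgy⟩, hyL⟩
    exact mem_biUnion ⟨⟨y, ⟨y, hyL, hgy⟩, hyL⟩, hg⟩ hgy
  have hclosed : IsClosed (⋃ g ∈ F, {y : X | g • y = y}) :=
    hF.isClosed_biUnion fun g _ => isClosed_eq (continuous_const_smul g) continuous_id
  obtain ⟨g, hg, hgx⟩ := mem_iUnion₂.1 (closure_minimal hsub hclosed
    (mem_closure_inter_of_mem_nhds hx hLx))
  exact ⟨g, hg.2, hgx⟩

theorem ProperlyDisc.eventually_smallSets_disjoint_smul (h : ProperlyDisc G X) {x : X}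
    (hx : ∀ g : G, g ≠ 1 → g • x ≠ x) :
    ∀ᶠ V in (𝓝 x).smallSets, ∀ g : G, g ≠ 1 → Disjoint (g • V) V := by
  obtain ⟨L, hL, hLx⟩ := exists_compact_mem_nhds x
  have hnear : ∀ᶠ V in (𝓝 x).smallSets, ∀ g ∈ {g : G | (g • L ∩ L).Nonempty},
      g ≠ 1 → Disjoint (g • V) V :=
    (eventually_all_finite (h.finite_smul_inter_nonempty hL)).2 fun g _ =>
      eventually_imp_distrib_left.2 fun hg => eventually_smallSets_disjoint_smul_of_smul_ne (hx g hg)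
  filter_upwards [hnear, eventually_smallSets_subset.2 hLx] with V hV hVL g hg
  by_cases hgL : (g • L ∩ L).Nonempty
  · exact hV g hgL hg
  · exact (disjoint_iff_inter_eq_empty.2 (not_nonempty_iff_eq_empty.1 hgL)).mono
      (smul_set_mono hVL) hVL

end Action

theorem frequently_smallSets_isOpen_measure_frontier_eq_zero {X : Type*} [PseudoMetricSpace X]
    [MeasurableSpace X] [OpensMeasurableSpace X] (μ : Measure X) [SFinite μ] (x : X) :
    ∃ᶠ V in (𝓝 x).smallSets, V ∈ 𝓝 x ∧ IsOpen V ∧ μ (frontier V) = 0 := by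
  refine frequently_smallSets.2 fun t ht => ?_
  obtain ⟨ε, hε, hball⟩ := Metric.mem_nhds_iff.1 ht
  obtain ⟨r, hr, hμ⟩ := exists_null_frontier_thickening μ {x} hε
  rw [Metric.thickening_singleton] at hμ
  exact ⟨_, (Metric.ball_subset_ball hr.2.le).trans hball, Metric.ball_mem_nhds x hr.1,
    Metric.isOpen_ball, hμ⟩

theorem Set.Countable.exists_nat_reindex {α ι : Type*} {Z : Set ι} (hZ : Z.Countable)
    (v : ι → Set α) : ∃ u : ℕ → Set α, (∀ n, u n = ∅ ∨ ∃ i ∈ Z, u n = v i) ∧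
      ⋃ n, u n = ⋃ i ∈ Z, v i ∧
      ∀ V : Set α, {i ∈ Z | (v i ∩ V).Nonempty}.Finite → {n | (u n ∩ V).Nonempty}.Finite := by
  have := hZ.toEncodable
  refine ⟨fun n => ⋃ z ∈ Encodable.decode₂ Z n, v z, fun n => ?_, ?_, fun V hV => ?_⟩
  · exact Encodable.iUnion_decode₂_cases (f := fun z : Z => v z)
      (C := fun s => s = ∅ ∨ ∃ i ∈ Z, s = v i)
      (Or.inl rfl) fun z => Or.inr ⟨z, z.2, rfl⟩
  · rw [Encodable.iUnion_decode₂, biUnion_eq_iUnion]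
  · refine ((hV.preimage Subtype.val_injective.injOn).image (Encodable.encode (α := Z))).subset ?_
    rintro n ⟨y, hy, hyV⟩
    simp only [mem_iUnion, Encodable.mem_decode₂] at hy
    obtain ⟨z, rfl, hz⟩ := hy
    exact ⟨z, ⟨z.2, y, hz, hyV⟩, rfl⟩

section Cover

variable {X : Type*} [TopologicalSpace X]

/- `v x` is chosen so small that `f < 2 f x` on it, and the centres are taken from the shells
`{x ∈ K | 1/(m+1) ≤ f x ≤ 1/m}` (written `m * f x ≤ 1`, so that `m = 0` bounds nothing); a
neighbourhood `{f > f y / 2}` of a point `y` with `f y > 0` then meets the sets `v x` of only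
finitely many shells. -/
theorem IsCompact.exists_countable_cover_locallyFinite_of_pos {K : Set X} (hK : IsCompact K)
    {f : X → ℝ} (hf : Continuous f) {P : Set X → Prop}
    (hP : ∀ x ∈ K, 0 < f x → ∃ᶠ V in (𝓝 x).smallSets, V ∈ 𝓝 x ∧ P V) :
    ∃ (Z : Set X) (v : X → Set X), Z.Countable ∧ (∀ z ∈ Z, P (v z)) ∧
      {x ∈ K | 0 < f x} ⊆ ⋃ z ∈ Z, v z ∧
      ∀ y, 0 < f y → ∃ V ∈ 𝓝 y, {z ∈ Z | (v z ∩ V).Nonempty}.Finite := by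
  have hsmall : ∀ x ∈ K, 0 < f x → ∃ V, (V ∈ 𝓝 x ∧ P V) ∧ V ⊆ {z | f z < 2 * f x} :=
    fun x hxK hx => ((hP x hxK hx).and_eventually (eventually_smallSets_subset.2
      (hf.continuousAt.eventually_lt continuousAt_const (by linarith)))).exists
  choose! v hv hv_lt using hsmall
  set T : ℕ → Set X := fun m => {x ∈ K | (m + 1 : ℝ)⁻¹ ≤ f x ∧ m * f x ≤ 1}
  have hT_pos : ∀ m, ∀ x ∈ T m, 0 < f x := fun m x hx =>
    (by positivity : (0 : ℝ) < (m + 1 : ℝ)⁻¹).trans_le hx.2.1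
  have hT : ∀ m, IsCompact (T m) := fun m => hK.inter_right
    ((isClosed_le continuous_const hf).inter (isClosed_le (continuous_const.mul hf) continuous_const))
  choose t ht_sub ht_cover using fun m =>
    (hT m).elim_nhds_subcover v fun x hx => (hv x hx.1 (hT_pos m x hx)).1
  have hZ : ∀ z ∈ ⋃ m, (t m : Set X), ∃ m, z ∈ t m ∧ z ∈ T m := fun z hz => by
    obtain ⟨m, hm⟩ := mem_iUnion.1 hz
    exact ⟨m, hm, ht_sub m z hm⟩
  refine ⟨⋃ m, (t m : Set X), v, countable_iUnion fun m => (t m).countable_toSet,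
    fun z hz => ?_, fun x hx => ?_, fun y hy => ?_⟩
  · obtain ⟨m, -, hzT⟩ := hZ z hz
    exact (hv z hzT.1 (hT_pos m z hzT)).2
  · set m := ⌊(f x)⁻¹⌋₊
    have hxT : x ∈ T m := by
      refine ⟨hx.1, (inv_lt_of_inv_lt₀ hx.2 (Nat.lt_floor_add_one _)).le, ?_⟩
      calc (m : ℝ) * f x ≤ (f x)⁻¹ * f x :=
          mul_le_mul_of_nonneg_right (Nat.floor_le (inv_nonneg.2 hx.2.le)) hx.2.le
        _ = 1 := inv_mul_cancel₀ hx.2.ne'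
    obtain ⟨z, hz, hxz⟩ := mem_iUnion₂.1 (ht_cover m hxT)
    exact mem_biUnion (mem_iUnion.2 ⟨m, hz⟩) hxz
  · obtain ⟨N, hN⟩ := exists_nat_gt (4 / f y)
    refine ⟨{z | f y / 2 < f z}, continuousAt_const.eventually_lt hf.continuousAt
      (half_lt_self hy), ((Finset.range N).finite_toSet.biUnion fun m _ =>
        (t m).finite_toSet).subset ?_⟩
    rintro z ⟨hz, w, hwv, hwV⟩
    obtain ⟨m, hzm, hzT⟩ := hZ z hz
    refine mem_biUnion (Finset.mem_range.2 ?_) hzm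
    have hwz : f y / 2 < 2 * f z := hwV.trans (hv_lt z hzT.1 (hT_pos m z hzT) hwv)
    have hmz : (m : ℝ) * f z ≤ 1 := hzT.2.2
    rw [div_lt_iff₀ hy] at hN
    exact_mod_cast (show (m : ℝ) < N by nlinarith [m.cast_nonneg (α := ℝ)])

theorem IsCompact.exists_seq_cover_sdiff_locallyFinite_compl [PerfectlyNormalSpace X]
    {K S : Set X} (hK : IsCompact K) (hS : IsClosed S) {P : Set X → Prop} (hP₀ : P ∅)
    (hP : ∀ x ∈ K \ S, ∃ᶠ V in (𝓝 x).smallSets, V ∈ 𝓝 x ∧ P V) :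
    ∃ u : ℕ → Set X, (∀ n, P (u n)) ∧ K \ S ⊆ ⋃ n, u n ∧
      ∀ y ∉ S, ∃ V ∈ 𝓝 y, {n | (u n ∩ V).Nonempty}.Finite := by
  obtain ⟨f, hfS, hf01⟩ := perfectlyNormalSpace_iff_forall_isClosed_preimage_zero.1 ‹_› S hS
  have hpos : ∀ x, 0 < f x ↔ x ∉ S := fun x => by
    rw [(hf01 x).1.lt_iff_ne', hfS]
    rfl
  obtain ⟨Z, v, hZ, hPv, hcover, hfin⟩ := hK.exists_countable_cover_locallyFinite_of_pos
    f.continuous fun x hxK hx => hP x ⟨hxK, (hpos x).1 hx⟩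
  obtain ⟨u, hu, hU, hufin⟩ := hZ.exists_nat_reindex v
  refine ⟨u, fun n => ?_, fun x hx => ?_, fun y hy => ?_⟩
  · rcases hu n with h | ⟨z, hz, h⟩ <;> rw [h]
    exacts [hP₀, hPv z hz]
  · rw [hU]
    exact hcover ⟨hx.1, (hpos x).2 hx.2⟩
  · obtain ⟨V, hV, hVfin⟩ := hfin y ((hpos y).2 hy)
    exact ⟨V, hV, hufin V hVfin⟩

end Cover

section SmulDisjointed

variable {G X : Type*} [Group G] [MulAction G X]

/-- An orbit version of `disjointed`; translating only by a finite `F` keeps boundaries null. -/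
def smulDisjointed (F : Set G) (u : ℕ → Set X) (n : ℕ) : Set X :=
  u n \ ⋃ i ∈ Iio n, ⋃ g ∈ F, g • u i

variable {F : Set G} {u : ℕ → Set X}

theorem iUnion_subset_iUnion_smul_iUnion_smulDisjointed (F : Set G) (u : ℕ → Set X) :
    ⋃ n, u n ⊆ ⋃ g : G, g • ⋃ n, smulDisjointed F u n := by
  refine iUnion_subset fun n y hn => ?_
  induction n using Nat.strong_induction_on generalizing y with
  | _ n ih =>
    by_cases hw : y ∈ smulDisjointed F u n
    · exact mem_iUnion.2 ⟨1, by rw [one_smul]; exact mem_iUnion.2 ⟨n, hw⟩⟩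
    obtain ⟨i, hi, g, -, hyg⟩ : ∃ i < n, ∃ g ∈ F, y ∈ g • u i := by
      simpa only [smulDisjointed, Set.mem_sdiff, hn, true_and, not_not, mem_iUnion, mem_Iio,
        exists_prop] using hw
    have hgy := mem_smul_set_iff_inv_smul_mem.1 hyg
    obtain ⟨h, hh⟩ := mem_iUnion.1 (ih i hi _ hgy)
    exact mem_iUnion.2 ⟨g * h, by rwa [mul_smul, mem_smul_set_iff_inv_smul_mem]⟩

theorem disjoint_smul_iUnion_smulDisjointed
    (hu : ∀ n, ∀ g : G, g ≠ 1 → Disjoint (g • u n) (u n))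
    (hF : ∀ g i j, (g • u i ∩ u j).Nonempty → g ∈ F) {g : G} (hg : g ≠ 1) :
    Disjoint (g • ⋃ n, smulDisjointed F u n) (⋃ n, smulDisjointed F u n) := by
  refine disjoint_left.2 fun y hgy hy => ?_
  obtain ⟨j, hj, hj'⟩ := mem_iUnion.1 (mem_smul_set_iff_inv_smul_mem.1 hgy)
  obtain ⟨i, hi, hi'⟩ := mem_iUnion.1 hy
  have hyj : y ∈ g • u j := mem_smul_set_iff_inv_smul_mem.2 hj
  rcases lt_trichotomy j i with hji | rfl | hij
  · exact hi' (mem_biUnion hji (mem_biUnion (hF g j i ⟨y, hyj, hi⟩) hyj))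
  · exact disjoint_left.1 (hu j g hg) hyj hi
  · have hyi : g⁻¹ • y ∈ g⁻¹ • u i := smul_mem_smul_set hi
    exact hj' (mem_biUnion hij (mem_biUnion (hF g⁻¹ i j ⟨_, hyi, hj⟩) hyi))

theorem smul_union_inter_union_subset {g : G} {W : Set X} (hW : Disjoint (g • W) W)
    (N : Set X) : g • (W ∪ N) ∩ (W ∪ N) ⊆ g • N ∪ N := by
  rw [smul_set_union]
  rintro y ⟨hy | hy, hy' | hy'⟩
  exacts [(disjoint_left.1 hW hy hy').elim, Or.inr hy', Or.inl hy, Or.inl hy]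

theorem iUnion_smul_subset_iUnion_smul {K B : Set X} (h : K ⊆ ⋃ g : G, g • B) :
    ⋃ g : G, g • K ⊆ ⋃ g : G, g • B := by
  refine iUnion_subset fun g => (smul_set_mono h).trans ?_
  rw [smul_set_iUnion]
  exact iUnion_subset fun h => subset_iUnion_of_subset (g * h) (by rw [mul_smul])

variable [TopologicalSpace X] [ContinuousConstSMul G X]

theorem measurableSet_iUnion_smulDisjointed [MeasurableSpace X] [OpensMeasurableSpace X]
    (hu : ∀ n, IsOpen (u n)) : MeasurableSet (⋃ n, smulDisjointed F u n) :=
  .iUnion fun n => (hu n).measurableSet.diff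
    (isOpen_biUnion fun i _ => isOpen_biUnion fun g _ => (hu i).smul g).measurableSet

variable [MeasurableSpace X] {μ : Measure X}

theorem measure_frontier_smulDisjointed (hF : F.Finite)
    (hnull : ∀ (g : G) (N : Set X), μ N = 0 → μ (g • N) = 0)
    (hu : ∀ n, μ (frontier (u n)) = 0) (n : ℕ) : μ (frontier (smulDisjointed F u n)) = 0 := by
  have hsub : frontier (smulDisjointed F u n) ⊆
      frontier (u n) ∪ ⋃ i ∈ Iio n, ⋃ g ∈ F, g • frontier (u i) := by
    refine (frontier_sdiff_subset _ _).trans (union_subset_union_right _ ?_)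
    refine (frontier_biUnion_subset (finite_Iio n) _).trans (iUnion₂_mono fun i _ => ?_)
    refine (frontier_biUnion_subset hF _).trans (iUnion₂_mono fun g _ => ?_)
    rw [frontier_smul]
  refine measure_mono_null hsub (measure_union_null (hu n) ?_)
  refine (measure_biUnion_null_iff (finite_Iio n).countable).2 fun i _ => ?_
  exact (measure_biUnion_null_iff hF.countable).2 fun g _ => hnull g _ (hu i)

theorem measure_frontier_iUnion_smulDisjointed (hF : F.Finite)
    (hnull : ∀ (g : G) (N : Set X), μ N = 0 → μ (g • N) = 0)
    (hu : ∀ n, μ (frontier (u n)) = 0) {S : Set X} (hS : μ S = 0)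
    (hfin : ∀ y ∉ S, ∃ V ∈ 𝓝 y, {n | (u n ∩ V).Nonempty}.Finite) :
    μ (frontier (⋃ n, smulDisjointed F u n)) = 0 := by
  have hfin' : ∀ y ∉ S, ∃ V ∈ 𝓝 y, {n | (smulDisjointed F u n ∩ V).Nonempty}.Finite :=
    fun y hy => (hfin y hy).imp fun V ⟨hV, hVfin⟩ =>
      ⟨hV, hVfin.subset fun n ⟨z, hz, hzV⟩ => ⟨z, hz.1, hzV⟩⟩
  exact measure_mono_null (frontier_iUnion_subset_of_locallyFinite_off hfin')
    (measure_union_null hS (measure_iUnion_null (measure_frontier_smulDisjointed hF hnull hu)))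

end SmulDisjointed

theorem exists_fundamental_domain_of_cover {G X : Type*} [Group G] [MulAction G X]
    [TopologicalSpace X] [T2Space X] [ContinuousConstSMul G X] [MeasurableSpace X]
    [OpensMeasurableSpace X] {μ : Measure X}
    (hnull : ∀ (g : G) (N : Set X), μ N = 0 → μ (g • N) = 0) (hPD : ProperlyDisc G X)
    {S : Set X} (hS : IsClosed S) (hSμ : μ S = 0) {K L : Set X} (hK : IsCompact K)
    (hL : IsCompact L) (hKL : K ⊆ L) (hKX : ⋃ g : G, g • K = univ) {u : ℕ → Set X}
    (hu : ∀ n, IsOpen (u n) ∧ u n ⊆ L ∧ μ (frontier (u n)) = 0 ∧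
      ∀ g : G, g ≠ 1 → Disjoint (g • u n) (u n))
    (hcover : K \ S ⊆ ⋃ n, u n) (hfin : ∀ y ∉ S, ∃ V ∈ 𝓝 y, {n | (u n ∩ V).Nonempty}.Finite) :
    ∃ B : Set X, MeasurableSet B ∧ IsCompact (closure B) ∧ ⋃ g : G, g • closure B = univ ∧
      μ (frontier B) = 0 ∧ ∀ g : G, g ≠ 1 → μ (g • B ∩ B) = 0 := by
  set F := {g : G | (g • L ∩ L).Nonempty}
  have hF : ∀ g i j, (g • u i ∩ u j).Nonempty → g ∈ F := fun g i j h =>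
    h.mono (inter_subset_inter (smul_set_mono (hu i).2.1) (hu j).2.1)
  set W := ⋃ n, smulDisjointed F u n
  have hKS : μ (K ∩ S) = 0 := measure_mono_null inter_subset_right hSμ
  have hKS_closed : IsClosed (K ∩ S) := hK.isClosed.inter hS
  have hKB : K ⊆ ⋃ g : G, g • (W ∪ K ∩ S) := fun x hxK => by
    by_cases hxS : x ∈ S
    · exact mem_iUnion.2 ⟨1, by rw [one_smul]; exact Or.inr ⟨hxK, hxS⟩⟩
    · exact iUnion_mono (fun g => smul_set_mono subset_union_left)
        (iUnion_subset_iUnion_smul_iUnion_smulDisjointed F u (hcover ⟨hxK, hxS⟩))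
  refine ⟨W ∪ K ∩ S, ?_, ?_, ?_, ?_, fun g hg => ?_⟩
  · exact (measurableSet_iUnion_smulDisjointed fun n => (hu n).1).union hKS_closed.measurableSet
  · refine hL.of_isClosed_subset isClosed_closure (closure_minimal ?_ hL.isClosed)
    exact union_subset (iUnion_subset fun n => sdiff_subset.trans (hu n).2.1)
      (inter_subset_left.trans hKL)
  · exact univ_subset_iff.1 (hKX ▸ iUnion_smul_subset_iUnion_smul
      (hKB.trans (iUnion_mono fun g => smul_set_mono subset_closure)))
  · have hW : μ (frontier W) = 0 := measure_frontier_iUnion_smulDisjointed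
      (hPD.finite_smul_inter_nonempty hL) hnull (fun n => (hu n).2.2.1) hSμ hfin
    exact measure_mono_null ((frontier_union_subset _ _).trans (union_subset_union
      inter_subset_left (inter_subset_right.trans hKS_closed.frontier_subset)))
      (measure_union_null hW hKS)
  · have hW : Disjoint (g • W) W :=
      disjoint_smul_iUnion_smulDisjointed (fun n => (hu n).2.2.2) hF hg
    exact measure_mono_null (smul_union_inter_union_subset hW _)
      (measure_union_null (hnull g _ hKS) hKS)

theorem exists_fundamental_domain_general
    {X : Type*} [MetricSpace X] [LocallyCompactSpace X]
    [MeasurableSpace X] [BorelSpace X]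
    (μ : Measure X) [SigmaFinite μ]
    {G : Type*} [Group G] [MulAction G X]
    (hcont : ∀ g : G, Continuous fun x : X => g • x)
    (hnull : ∀ (g : G) (N : Set X), μ N = 0 → μ (g • N) = 0)
    -- (i)
    (hPD : ProperlyDisc G X)
    -- (ii)
    (hstab : μ {x : X | ∃ g : G, g ≠ 1 ∧ g • x = x} = 0)
    -- (iii)
    (K : Set X) (hK : IsCompact K) (hKX : (⋃ g : G, g • K) = Set.univ) :
    ∃ B : Set X, MeasurableSet B ∧ IsCompact (closure B) ∧
      (⋃ g : G, g • closure B) = Set.univ ∧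
      μ (frontier B) = 0 ∧
      ∀ g : G, g ≠ 1 → μ ((g • B) ∩ B) = 0 := by
  have : ContinuousConstSMul G X := ⟨hcont⟩
  set S := {x : X | ∃ g : G, g ≠ 1 ∧ g • x = x}
  have hS : IsClosed S := hPD.isClosed_setOf_exists_ne_one_smul_eq
  obtain ⟨L, hL, hKL⟩ := exists_compact_superset hK
  have hsmall : ∀ x ∈ K \ S, ∃ᶠ V in (𝓝 x).smallSets, V ∈ 𝓝 x ∧ (IsOpen V ∧ V ⊆ L ∧
      μ (frontier V) = 0 ∧ ∀ g : G, g ≠ 1 → Disjoint (g • V) V) := fun x hx =>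
    ((frequently_smallSets_isOpen_measure_frontier_eq_zero μ x).and_eventually
      ((eventually_smallSets_subset.2 (mem_interior_iff_mem_nhds.1 (hKL hx.1))).and
        (hPD.eventually_smallSets_disjoint_smul fun g hg hgx => hx.2 ⟨g, hg, hgx⟩))).mono
      fun V ⟨⟨hV, hVo, hVμ⟩, hVL, hVd⟩ => ⟨hV, hVo, hVL, hVμ, hVd⟩
  obtain ⟨u, hu, hcover, hfin⟩ :=
    hK.exists_seq_cover_sdiff_locallyFinite_compl hS (by simp) hsmall
  exact exists_fundamental_domain_of_cover hnull hPD hS hstab hK hL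
    (hKL.trans interior_subset) hKX hu hcover hfin

/-- **Lemma A.1 (existence of a fundamental domain).** Let `X` be a complete
locally compact metric space, `μ` a nonnegative σ-finite Radon measure and `G`
a topological group acting on `X` by homeomorphisms preserving `μ`-nullsets.
If (i) the action is properly discontinuous, (ii) the set of points with
nontrivial stabilizer has `μ`-measure zero, and (iii) there is a compact `K`
with `GK = X`, then there is a precompact Borel set `B` with `G·closure(B) = X`,
`μ(∂B) = 0` and `μ(gB ∩ B) = 0` for all `g ≠ 1`. -/
theorem exists_fundamental_domain
    {X : Type*} [MetricSpace X] [CompleteSpace X] [LocallyCompactSpace X]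
    [MeasurableSpace X] [BorelSpace X]
    (μ : Measure X) [SigmaFinite μ] [μ.Regular]
    {G : Type*} [Group G] [TopologicalSpace G] [IsTopologicalGroup G] [MulAction G X]
    (hcont : ∀ g : G, Continuous fun x : X => g • x)
    (hnull : ∀ (g : G) (N : Set X), μ N = 0 → μ (g • N) = 0)
    -- (i)
    (hPD : ProperlyDisc G X)
    -- (ii)
    (hstab : μ {x : X | ∃ g : G, g ≠ 1 ∧ g • x = x} = 0)
    -- (iii)
    (K : Set X) (hK : IsCompact K) (hKX : (⋃ g : G, g • K) = Set.univ) :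
    ∃ B : Set X, MeasurableSet B ∧ IsCompact (closure B) ∧
      (⋃ g : G, g • closure B) = Set.univ ∧
      μ (frontier B) = 0 ∧
      ∀ g : G, g ≠ 1 → μ ((g • B) ∩ B) = 0 :=
  exists_fundamental_domain_general μ hcont hnull hPD hstab K hK hKX
end
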